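/- arXiv:2108.04437 — 2 statements merged into one kernel-verified Lean document; each statement's English description precedes it below -/
import Mathlib

section
/- Let beta-hat, beta0 be vectors in R^p, S0 a subset of coordinates with complement S0^c, and lambda > 0. Suppose E + lambda * ||(beta-hat - beta0) restricted to S0^c||_1 <= 3 * lambda * ||(beta-hat - beta0) restricted to S0||_1 with E >= 0. If the compatibility condition holds, namely ||(beta-hat - beta0)_{S0}||_1^2 <= (s0 / (phi0^2 * N)) * ||X (beta-hat - beta0)||_2^2 whenever ||(beta-hat - beta0)_{S0^c}||_1 <= 3||(beta-hat - beta0)_{S0}||_1, then E + lambda * ||beta-hat - beta0||_1 <= (4 * lambda / phi0) * sqrt(s0 / N) * ||X(beta-hat - beta0)||_2. -/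
open Finset

/-- Compatibility-condition step in the lasso consistency proof. -/
theorem compat_step (p N : ℕ) (X : Matrix (Fin N) (Fin p) ℝ)
    (βh β0 : Fin p → ℝ) (S0 : Finset (Fin p)) (s0 : ℕ) (hs0 : S0.card = s0)
    (phi0 lam E : ℝ) (hphi : 0 < phi0) (hlam : 0 < lam) (hE : 0 ≤ E)
    (hbasic : E + lam * ∑ i ∈ S0ᶜ, |βh i - β0 i| ≤ 3 * lam * ∑ i ∈ S0, |βh i - β0 i|)
    (hcompat : (∑ i ∈ S0ᶜ, |βh i - β0 i|) ≤ 3 * ∑ i ∈ S0, |βh i - β0 i| →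
      (∑ i ∈ S0, |βh i - β0 i|) ^ 2 ≤
        ((s0 : ℝ) / (phi0 ^ 2 * N)) * ∑ k, (X.mulVec (βh - β0) k) ^ 2) :
    E + lam * ∑ i, |βh i - β0 i| ≤
      (4 * lam / phi0) * Real.sqrt ((s0 : ℝ) / N) *
        Real.sqrt (∑ k, (X.mulVec (βh - β0) k) ^ 2) := by
  set a := ∑ i ∈ S0, |βh i - β0 i| with ha_def
  set b := ∑ i ∈ S0ᶜ, |βh i - β0 i| with hb_def
  set Q := ∑ k, (X.mulVec (βh - β0) k) ^ 2 with hQ_def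
  have ha : 0 ≤ a := Finset.sum_nonneg fun i _ => abs_nonneg _
  have hb : 0 ≤ b := Finset.sum_nonneg fun i _ => abs_nonneg _
  have hQ : 0 ≤ Q := Finset.sum_nonneg fun k _ => sq_nonneg _
  have hsN : (0:ℝ) ≤ (s0 : ℝ) / N := by positivity
  have hsplit : (∑ i, |βh i - β0 i|) = a + b := by
    rw [ha_def, hb_def, Finset.sum_add_sum_compl]
  have hba : b ≤ 3 * a := by nlinarith
  have h2 := hcompat hba
  set s := Real.sqrt ((s0 : ℝ) / N) with hs_def
  set q := Real.sqrt Q with hq_def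
  have hs2 : s ^ 2 = (s0 : ℝ) / N := Real.sq_sqrt hsN
  have hq2 : q ^ 2 = Q := Real.sq_sqrt hQ
  have hsnn : 0 ≤ s := Real.sqrt_nonneg _
  have hqnn : 0 ≤ q := Real.sqrt_nonneg _
  have key : phi0 * a ≤ s * q := by
    have h3 : (phi0 * a) ^ 2 ≤ (s * q) ^ 2 := by
      have hsq : (s * q) ^ 2 = (s0 : ℝ) / N * Q := by rw [mul_pow, hs2, hq2]
      rw [hsq, mul_pow]
      calc phi0 ^ 2 * a ^ 2 ≤ phi0 ^ 2 * ((s0 : ℝ) / (phi0 ^ 2 * N) * Q) :=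
            mul_le_mul_of_nonneg_left h2 (sq_nonneg _)
        _ = (s0 : ℝ) / N * Q := by
            rcases Nat.eq_zero_or_pos N with hN | hN
            · subst hN; simp
            · field_simp
    calc phi0 * a = Real.sqrt ((phi0 * a) ^ 2) :=
          (Real.sqrt_sq (by positivity)).symm
      _ ≤ Real.sqrt ((s * q) ^ 2) := Real.sqrt_le_sqrt h3
      _ = s * q := Real.sqrt_sq (by positivity)
  have haq : a ≤ s * q / phi0 := (le_div_iff₀ hphi).mpr (by linarith [key])
  rw [hsplit]
  have h4 : (4 * lam / phi0) * s * q = 4 * lam * (s * q / phi0) := by ring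
  rw [h4]
  nlinarith [mul_le_mul_of_nonneg_left haq (by positivity : (0:ℝ) ≤ 4 * lam)]
end

section
/- Let A and B be symmetric p-by-p matrices with ||A - B||_infinity (entrywise max norm) <= epsilon, and suppose B satisfies the compatibility condition with constant phi > 0 for index set S of size s, i.e., ||v_S||_1^2 <= (s/phi^2) * v^T B v for all v with ||v_{S^c}||_1 <= 3||v_S||_1. If 32 * s * epsilon <= phi^2, then A satisfies the compatibility condition for S with constant phi/sqrt(2): ||v_S||_1^2 <= (2s/phi^2) * v^T A v for all v with ||v_{S^c}||_1 <= 3||v_S||_1. -/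
open Finset Matrix

/-- Perturbation stability of the compatibility condition (Bühlmann–van de Geer,
Corollary 6.8): an entrywise `ε`-perturbation `A` of `B` retains the compatibility
condition with constant `φ/√2`, provided `32 s ε ≤ φ²`. -/
theorem compat_perturbation (p : ℕ) (A B : Matrix (Fin p) (Fin p) ℝ)
    (hA : A.IsSymm) (hB : B.IsSymm) (ε φ : ℝ) (hφ : 0 < φ)
    (S : Finset (Fin p)) (s : ℕ) (hs : S.card = s)
    (hAB : ∀ i j, |A i j - B i j| ≤ ε)
    (hcompatB : ∀ v : Fin p → ℝ, (∑ i ∈ Sᶜ, |v i|) ≤ 3 * ∑ i ∈ S, |v i| →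
      (∑ i ∈ S, |v i|) ^ 2 ≤ ((s : ℝ) / φ ^ 2) * (v ⬝ᵥ B.mulVec v))
    (hε : 32 * s * ε ≤ φ ^ 2) :
    ∀ v : Fin p → ℝ, (∑ i ∈ Sᶜ, |v i|) ≤ 3 * ∑ i ∈ S, |v i| →
      (∑ i ∈ S, |v i|) ^ 2 ≤ (2 * (s : ℝ) / φ ^ 2) * (v ⬝ᵥ A.mulVec v) := by
  rcases Nat.eq_zero_or_pos p with hp | hp
  · subst hp
    intro v hv
    simp [Finset.eq_empty_of_isEmpty S, dotProduct]
  intro v hv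
  have hφ2 : (0:ℝ) < φ ^ 2 := by positivity
  set a : ℝ := ∑ i ∈ S, |v i| with ha_def
  have ha : 0 ≤ a := Finset.sum_nonneg fun i _ => abs_nonneg _
  have hT : (∑ i, |v i|) ≤ 4 * a := by
    rw [← Finset.sum_add_sum_compl S (fun i => |v i|)]
    linarith
  have hTnn : (0:ℝ) ≤ ∑ i, |v i| := Finset.sum_nonneg fun i _ => abs_nonneg _
  -- key perturbation bound
  have key : v ⬝ᵥ B.mulVec v - v ⬝ᵥ A.mulVec v ≤ ε * (16 * a ^ 2) := by
    have h1 : v ⬝ᵥ B.mulVec v - v ⬝ᵥ A.mulVec v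
        = ∑ i, ∑ j, v i * ((B i j - A i j) * v j) := by
      simp only [dotProduct, mulVec, Finset.mul_sum, ← Finset.sum_sub_distrib]
      apply Finset.sum_congr rfl; intro i _
      apply Finset.sum_congr rfl; intro j _
      ring
    have h2 : ∑ i, ∑ j, v i * ((B i j - A i j) * v j)
        ≤ ∑ i, ∑ j, |v i| * (ε * |v j|) := by
      apply Finset.sum_le_sum; intro i _
      apply Finset.sum_le_sum; intro j _
      calc v i * ((B i j - A i j) * v j)
          ≤ |v i * ((B i j - A i j) * v j)| := le_abs_self _
        _ = |v i| * (|B i j - A i j| * |v j|) := by rw [abs_mul, abs_mul]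
        _ ≤ |v i| * (ε * |v j|) := by
            have h := hAB i j
            rw [abs_sub_comm] at h
            exact mul_le_mul_of_nonneg_left
              (mul_le_mul_of_nonneg_right h (abs_nonneg _)) (abs_nonneg _)
    have h3 : ∑ i, ∑ j, |v i| * (ε * |v j|) = ε * (∑ i, |v i|) ^ 2 := by
      simp only [← Finset.mul_sum, ← Finset.sum_mul]
      ring
    have hε0 : 0 ≤ ε := le_trans (abs_nonneg _) (hAB ⟨0, hp⟩ ⟨0, hp⟩)
    have h4 : ε * (∑ i, |v i|) ^ 2 ≤ ε * (16 * a ^ 2) := by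
      have : (∑ i, |v i|) ^ 2 ≤ (4 * a) ^ 2 := by nlinarith
      nlinarith
    calc v ⬝ᵥ B.mulVec v - v ⬝ᵥ A.mulVec v
        = ∑ i, ∑ j, v i * ((B i j - A i j) * v j) := h1
      _ ≤ ∑ i, ∑ j, |v i| * (ε * |v j|) := h2
      _ = ε * (∑ i, |v i|) ^ 2 := h3
      _ ≤ ε * (16 * a ^ 2) := h4
  have hcB := hcompatB v hv
  rw [div_mul_eq_mul_div, le_div_iff₀ hφ2] at hcB ⊢
  have hsnn : (0:ℝ) ≤ (s:ℝ) := Nat.cast_nonneg s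
  nlinarith [mul_le_mul_of_nonneg_left key hsnn,
    mul_le_mul_of_nonneg_right hε (sq_nonneg a)]
end
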